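/- For a forecasting competition with n players (n > 1/p_0) over m binary events with outcome distribution Q on {0,1}^m, in every pure Nash equilibrium all forecasters report vertices of the hypercube (x_i ∈ {0,1}^m) and every outcome y ∈ {0,1}^m with Q(y) > 0 is reported by at least one forecaster. -/

import Mathlib

open Finset
open scoped ENNReal Classical

noncomputable def closestSet {X Y : Type*} {n : ℕ} (d : X → Y → ℝ≥0∞) (xs : Fin n → X)
    (y : Y) : Finset (Fin n) :=
  Finset.univ.filter fun i => ∀ j, d (xs i) y ≤ d (xs j) y

/-- Player `i`'s share of target `y`: `1/|X_min|` if `i` is among the closest players, else 0. -/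
noncomputable def share {X Y : Type*} {n : ℕ} (d : X → Y → ℝ≥0∞) (xs : Fin n → X) (y : Y)
    (i : Fin n) : ℝ :=
  if i ∈ closestSet d xs y then ((closestSet d xs y).card : ℝ)⁻¹ else 0

/-- Player `i`'s expected utility `E_{y∼Q}[π_i]`. -/
noncomputable def utility {X Y : Type*} [Fintype Y] {n : ℕ} (d : X → Y → ℝ≥0∞) (Q : Y → ℝ)
    (xs : Fin n → X) (i : Fin n) : ℝ :=
  ∑ y, Q y * share d xs y i

/-- The vertex of `[0,1]^m` corresponding to an outcome `y ∈ {0,1}^m`. -/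
noncomputable def vert (m : ℕ) (y : Fin m → Bool) : Fin m → ℝ :=
  fun j => if y j then 1 else 0

/-- The `ℓ₂` proximity between a forecast `x ∈ [0,1]^m` and an outcome `y ∈ {0,1}^m`. -/
noncomputable def dForecast (m : ℕ) (x : Fin m → ℝ) (y : Fin m → Bool) : ℝ≥0∞ :=
  ENNReal.ofReal (Real.sqrt (∑ j, (x j - vert m y j) ^ 2))

section Competition

variable {X Y : Type*} {n : ℕ} {d : X → Y → ℝ≥0∞} {Q : Y → ℝ} {xs : Fin n → X} {y : Y}
  {i : Fin n}

def IsPureNash [Fintype Y] (d : X → Y → ℝ≥0∞) (Q : Y → ℝ) (S : Set X) (xs : Fin n → X) :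
    Prop :=
  ∀ i, ∀ x' ∈ S, utility d Q (Function.update xs i x') i ≤ utility d Q xs i

lemma mem_closestSet_iff : i ∈ closestSet d xs y ↔ ∀ j, d (xs i) y ≤ d (xs j) y := by
  simp [closestSet]

lemma mem_closestSet_of_eq_zero (h : d (xs i) y = 0) : i ∈ closestSet d xs y :=
  mem_closestSet_iff.mpr fun _ => h ▸ zero_le

lemma closestSet_nonempty (hn : 0 < n) (d : X → Y → ℝ≥0∞) (xs : Fin n → X) (y : Y) :
    (closestSet d xs y).Nonempty := by
  obtain ⟨i, -, hi⟩ := exists_min_image univ (fun i => d (xs i) y) ⟨⟨0, hn⟩, mem_univ _⟩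
  exact ⟨i, mem_closestSet_iff.mpr fun j => hi j (mem_univ j)⟩

lemma closestSet_eq_singleton (h : d (xs i) y = 0) (hothers : ∀ j ≠ i, d (xs j) y ≠ 0) :
    closestSet d xs y = {i} := by
  refine eq_singleton_iff_unique_mem.mpr ⟨mem_closestSet_of_eq_zero h, fun j hj => ?_⟩
  by_contra hji
  exact hothers j hji (le_antisymm (h ▸ mem_closestSet_iff.mp hj i) zero_le)

lemma share_nonneg : 0 ≤ share d xs y i := by
  unfold share
  split <;> positivity

lemma share_eq_zero_of_exists (hy : ∃ j, d (xs j) y = 0) (hi : d (xs i) y ≠ 0) :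
    share d xs y i = 0 := by
  obtain ⟨j, hj⟩ := hy
  have hi' : i ∉ closestSet d xs y := fun hmem =>
    hi (le_antisymm (hj ▸ mem_closestSet_iff.mp hmem j) zero_le)
  simp [share, hi']

lemma sum_share (hn : 0 < n) : ∑ i, share d xs y i = 1 := by
  have hcard : ((closestSet d xs y).card : ℝ) ≠ 0 := by
    exact_mod_cast (card_pos.mpr (closestSet_nonempty hn d xs y)).ne'
  simp only [share]
  rw [sum_ite_mem, univ_inter, sum_const, nsmul_eq_mul, mul_inv_cancel₀ hcard]

variable [Fintype Y]

lemma sum_utility (hn : 0 < n) : ∑ i, utility d Q xs i = ∑ y, Q y := by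
  simp only [utility]
  rw [sum_comm]
  simp only [← mul_sum, sum_share hn, mul_one]

lemma exists_utility_le_sum_div (hn : 0 < n) : ∃ i, utility d Q xs i ≤ (∑ y, Q y) / n := by
  obtain ⟨i, -, hi⟩ := exists_le_of_sum_le (univ_nonempty_iff.mpr ⟨⟨0, hn⟩⟩)
    (f := utility d Q xs) (g := fun _ => (∑ y, Q y) / n) <| by
      rw [sum_utility hn, sum_const, card_univ, Fintype.card_fin, nsmul_eq_mul,
        mul_div_cancel₀ _ (by exact_mod_cast hn.ne')]
  exact ⟨i, hi⟩

lemma div_card_closestSet_le_utility (hQ : ∀ y, 0 ≤ Q y) (h : d (xs i) y = 0) :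
    Q y / (closestSet d xs y).card ≤ utility d Q xs i := by
  have hshare : share d xs y i = ((closestSet d xs y).card : ℝ)⁻¹ := by
    simp [share, mem_closestSet_of_eq_zero h]
  calc Q y / (closestSet d xs y).card = Q y * share d xs y i := by rw [hshare, div_eq_mul_inv]
    _ ≤ utility d Q xs i :=
      single_le_sum (f := fun y => Q y * share d xs y i)
        (fun y _ => mul_nonneg (hQ y) share_nonneg) (mem_univ y)

lemma utility_pos_of_eq_zero (hn : 0 < n) (hQ : ∀ y, 0 ≤ Q y) (hQy : 0 < Q y)
    (h : d (xs i) y = 0) : 0 < utility d Q xs i := by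
  have hcard : (0 : ℝ) < (closestSet d xs y).card := by
    exact_mod_cast card_pos.mpr (closestSet_nonempty hn d xs y)
  exact (div_pos hQy hcard).trans_le (div_card_closestSet_le_utility hQ h)

lemma le_utility_of_unique_eq_zero (hQ : ∀ y, 0 ≤ Q y) (h : d (xs i) y = 0)
    (hothers : ∀ j ≠ i, d (xs j) y ≠ 0) : Q y ≤ utility d Q xs i := by
  simpa [closestSet_eq_singleton h hothers] using div_card_closestSet_le_utility hQ h

lemma utility_eq_zero_of_covers (hcover : ∀ y, ∃ j, d (xs j) y = 0)
    (hi : ∀ y, d (xs i) y ≠ 0) : utility d Q xs i = 0 :=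
  sum_eq_zero fun y _ => by rw [share_eq_zero_of_exists (hcover y) (hi y), mul_zero]

variable {S : Set X}

/-- Otherwise the poorest player, who earns at most the average `(∑ Q) / n`, would move onto `y`
and win it alone. -/
lemma IsPureNash.exists_eq_zero_of_sum_div_lt (hnash : IsPureNash d Q S xs) (hn : 0 < n)
    (hQ : ∀ y, 0 ≤ Q y) {v : X} (hvS : v ∈ S) (hv : d v y = 0)
    (hQy : (∑ y, Q y) / n < Q y) : ∃ j, d (xs j) y = 0 := by
  by_contra! hnobody
  obtain ⟨i, hi⟩ := exists_utility_le_sum_div (d := d) (Q := Q) (xs := xs) hn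
  have hdev : Q y ≤ utility d Q (Function.update xs i v) i :=
    le_utility_of_unique_eq_zero hQ (by rwa [Function.update_self]) fun j hj => by
      rw [Function.update_of_ne hj]; exact hnobody j
  linarith [hnash i v hvS]

/-- A player forecasting no outcome exactly earns nothing once every outcome is covered, but would
earn a positive share by moving onto one. -/
lemma IsPureNash.exists_eq_zero_of_covers (hnash : IsPureNash d Q S xs) (hn : 0 < n)
    (hQ : ∀ y, 0 < Q y) (hcover : ∀ y, ∃ j, d (xs j) y = 0) {v : X} (hvS : v ∈ S)
    (hv : d v y = 0) (i : Fin n) : ∃ y, d (xs i) y = 0 := by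
  by_contra! hi
  have hdev : 0 < utility d Q (Function.update xs i v) i :=
    utility_pos_of_eq_zero hn (fun y => (hQ y).le) (hQ y) (by rwa [Function.update_self])
  linarith [hnash i v hvS, utility_eq_zero_of_covers (Q := Q) hcover hi]

end Competition

lemma vert_mem_Icc {m : ℕ} (y : Fin m → Bool) (j : Fin m) : vert m y j ∈ Set.Icc (0 : ℝ) 1 := by
  unfold vert
  split <;> simp

lemma dForecast_eq_zero_iff {m : ℕ} {x : Fin m → ℝ} {y : Fin m → Bool} :
    dForecast m x y = 0 ↔ x = vert m y := by
  have hs : 0 ≤ ∑ j, (x j - vert m y j) ^ 2 := by positivity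
  rw [dForecast, ENNReal.ofReal_eq_zero, ← not_lt, Real.sqrt_pos, not_lt, hs.ge_iff_eq',
    Fintype.sum_eq_zero_iff_of_nonneg fun _ => sq_nonneg _, funext_iff]
  simp [sub_eq_zero, funext_iff]

theorem forecasting_pure_nash_extreme_and_covers_general (m n : ℕ)
    (Q : (Fin m → Bool) → ℝ) (hQpos : ∀ y, 0 < Q y) (hQsum : ∑ y, Q y = 1)
    (p0 : ℝ) (hp0le : ∀ y, p0 ≤ Q y) (hp0mem : ∃ y, Q y = p0)
    (hn : 1 / p0 < n)
    (xs : Fin n → Fin m → ℝ)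
    (hnash : ∀ (i : Fin n) (x' : Fin m → ℝ), (∀ j, x' j ∈ Set.Icc (0 : ℝ) 1) →
      utility (dForecast m) Q (Function.update xs i x') i ≤ utility (dForecast m) Q xs i) :
    (∀ i, ∃ y, xs i = vert m y) ∧ (∀ y, 0 < Q y → ∃ i, xs i = vert m y) := by
  have hnash' : IsPureNash (dForecast m) Q {x | ∀ j, x j ∈ Set.Icc (0 : ℝ) 1} xs := hnash
  obtain ⟨y₀, hy₀⟩ := hp0mem
  have hp0 : 0 < p0 := hy₀ ▸ hQpos y₀
  have hnR : (0 : ℝ) < n := (one_div_pos.mpr hp0).trans hn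
  have hnat : 0 < n := by exact_mod_cast hnR
  have hQ_gt_avg : ∀ y, (∑ y, Q y) / n < Q y := fun y => by
    rw [hQsum, div_lt_iff₀ hnR]
    rw [div_lt_iff₀ hp0] at hn
    nlinarith [hp0le y]
  have hcover : ∀ y, ∃ j, dForecast m (xs j) y = 0 := fun y =>
    hnash'.exists_eq_zero_of_sum_div_lt hnat (fun y => (hQpos y).le) (vert_mem_Icc y)
      (dForecast_eq_zero_iff.mpr rfl) (hQ_gt_avg y)
  refine ⟨fun i => ?_, fun y _ => ?_⟩
  · obtain ⟨y, hy⟩ := hnash'.exists_eq_zero_of_covers hnat hQpos hcover (vert_mem_Icc y₀)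
      (dForecast_eq_zero_iff.mpr rfl) i
    exact ⟨y, dForecast_eq_zero_iff.mp hy⟩
  · obtain ⟨j, hj⟩ := hcover y
    exact ⟨j, dForecast_eq_zero_iff.mp hj⟩

/-- in a forecasting competition with `n > 1/p₀` forecasters, every pure Nash
equilibrium has all forecasters on vertices of the hypercube, and every outcome with
positive probability is reported by some forecaster. -/
theorem forecasting_pure_nash_extreme_and_covers (m n : ℕ)
    (Q : (Fin m → Bool) → ℝ) (hQpos : ∀ y, 0 < Q y) (hQsum : ∑ y, Q y = 1)
    (p0 : ℝ) (hp0le : ∀ y, p0 ≤ Q y) (hp0mem : ∃ y, Q y = p0)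
    (hn : 1 / p0 < n)
    (xs : Fin n → Fin m → ℝ) (hcube : ∀ i j, xs i j ∈ Set.Icc (0 : ℝ) 1)
    (hnash : ∀ (i : Fin n) (x' : Fin m → ℝ), (∀ j, x' j ∈ Set.Icc (0 : ℝ) 1) →
      utility (dForecast m) Q (Function.update xs i x') i ≤ utility (dForecast m) Q xs i) :
    (∀ i, ∃ y, xs i = vert m y) ∧ (∀ y, 0 < Q y → ∃ i, xs i = vert m y) :=
  forecasting_pure_nash_extreme_and_covers_general m n Q hQpos hQsum p0 hp0le hp0mem hn xs hnash
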